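/- Let Q be a rack and C a maximal R-clique of Q. Then C is a subrack of Q (closed under * and /), and C is a union of equivalence classes of the Cayley kernel relation ≡. -/

import Mathlib

/-!
A maximal R-clique `C` consists exactly of the elements `x` whose right translation `R_x` lies in
the centralizer of `{R_c | c ∈ C}`. That centralizer is a subgroup of `Sym(Q)`, and
self-distributivity gives `R_{a*b} = R_b R_a R_b⁻¹` and `R_{a/b} = R_b⁻¹ R_a R_b`; so it contains
`R_{a*b}` and `R_{a/b}` for `a, b ∈ C`, and `R_b = R_a` for `b ≡ a`.
-/

/-- A (right) rack: a set with a binary operation `mul` such that every right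
translation `R_x : y ↦ y * x` is a bijection (with inverse given by the right
division `div`), satisfying right self-distributivity. -/
class RightRack (Q : Type*) where
  mul : Q → Q → Q
  div : Q → Q → Q
  div_mul : ∀ x y : Q, mul (div x y) y = x
  mul_div : ∀ x y : Q, div (mul x y) y = x
  self_distrib : ∀ x y z : Q, mul (mul x y) z = mul (mul x z) (mul y z)

namespace RightRack

/-- The right translation `R_x` as a permutation of `Q`. -/
def rt {Q : Type*} [RightRack Q] (x : Q) : Equiv.Perm Q where
  toFun y := mul y x
  invFun y := div y x
  left_inv y := mul_div y x
  right_inv y := div_mul y x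

/-- The right multiplication group `Rmlt(Q)`: the subgroup of the symmetric group
on `Q` generated by all right translations. -/
def rmlt (Q : Type*) [RightRack Q] : Subgroup (Equiv.Perm Q) :=
  Subgroup.closure (Set.range (rt : Q → Equiv.Perm Q))

end RightRack

/-- A quandle: an idempotent rack. -/
class RightQuandle (Q : Type*) extends RightRack Q where
  idem : ∀ x : Q, mul x x = x

/-- The R-commuting relation: `a ∼ b` iff `R_a ∘ R_b = R_b ∘ R_a`. -/
def rsim {Q : Type*} [RightRack Q] (a b : Q) : Prop :=
  ∀ y : Q, RightRack.mul (RightRack.mul y b) a = RightRack.mul (RightRack.mul y a) b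

namespace RightRack

variable {Q : Type*} [RightRack Q]

theorem rt_eq_rt_iff {a b : Q} : rt a = rt b ↔ ∀ y : Q, mul y a = mul y b :=
  Equiv.ext_iff

theorem _root_.rsim_iff_commute {a b : Q} : rsim a b ↔ Commute (rt a) (rt b) :=
  (Equiv.ext_iff (f := rt a * rt b) (g := rt b * rt a)).symm

theorem rt_mul (a b : Q) : rt (mul a b) = rt b * rt a * (rt b)⁻¹ := by
  ext y
  change mul y (mul a b) = mul (mul (div y b) a) b
  rw [self_distrib, div_mul]

theorem rt_div (a b : Q) : rt (div a b) = (rt b)⁻¹ * rt a * rt b := by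
  calc rt (div a b) = (rt b)⁻¹ * (rt b * rt (div a b) * (rt b)⁻¹) * rt b := by group
    _ = (rt b)⁻¹ * rt a * rt b := by rw [← rt_mul, div_mul]

theorem rt_mem_centralizer_of_mem {C : Set Q} (hC : ∀ a ∈ C, ∀ b ∈ C, rsim a b) {a : Q}
    (ha : a ∈ C) : rt a ∈ Subgroup.centralizer (rt '' C) := by
  rintro _ ⟨c, hc, rfl⟩
  exact (rsim_iff_commute.mp (hC c hc a ha)).eq

theorem mem_of_rt_mem_centralizer {C : Set Q} (hC : ∀ a ∈ C, ∀ b ∈ C, rsim a b)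
    (hmax : ∀ D : Set Q, (∀ a ∈ D, ∀ b ∈ D, rsim a b) → C ⊆ D → D = C) {x : Q}
    (hx : rt x ∈ Subgroup.centralizer (rt '' C)) : x ∈ C := by
  have hcomm : ∀ c ∈ C, Commute (rt c) (rt x) := fun c hc => hx (rt c) ⟨c, hc, rfl⟩
  have hclique : ∀ a ∈ insert x C, ∀ b ∈ insert x C, rsim a b := by
    rintro a (rfl | ha) b (rfl | hb)
    · exact fun _ => rfl
    · exact rsim_iff_commute.mpr (hcomm b hb).symm
    · exact rsim_iff_commute.mpr (hcomm a ha)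
    · exact hC a ha b hb
  rw [← hmax _ hclique (Set.subset_insert x C)]
  exact Set.mem_insert x C

end RightRack

open RightRack in
/-- Let `Q` be a rack and `C` a maximal R-clique of `Q` (an R-clique not properly
contained in any other R-clique). Then `C` is a subrack of `Q` (closed under `*`
and `/`), and `C` is a union of equivalence classes of the Cayley kernel relation
`≡` (where `a ≡ b` iff `R_a = R_b`). -/
theorem maximal_rclique_subrack_and_union_of_cayley_classes {Q : Type*} [RightRack Q]
    (C : Set Q) (hC : ∀ a ∈ C, ∀ b ∈ C, rsim a b)
    (hmax : ∀ D : Set Q, (∀ a ∈ D, ∀ b ∈ D, rsim a b) → C ⊆ D → D = C) :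
    ((∀ a ∈ C, ∀ b ∈ C, RightRack.mul a b ∈ C) ∧
      (∀ a ∈ C, ∀ b ∈ C, RightRack.div a b ∈ C)) ∧
      (∀ a ∈ C, ∀ b : Q,
        (∀ y : Q, RightRack.mul y a = RightRack.mul y b) → b ∈ C) := by
  set Z := Subgroup.centralizer (rt '' C)
  have hZ : ∀ a ∈ C, rt a ∈ Z := fun a => rt_mem_centralizer_of_mem hC
  have hmem : ∀ x, rt x ∈ Z → x ∈ C := fun x => mem_of_rt_mem_centralizer hC hmax
  refine ⟨⟨fun a ha b hb => hmem _ ?_, fun a ha b hb => hmem _ ?_⟩, fun a ha b hab => hmem _ ?_⟩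
  · rw [rt_mul]
    exact mul_mem (mul_mem (hZ b hb) (hZ a ha)) (inv_mem (hZ b hb))
  · rw [rt_div]
    exact mul_mem (mul_mem (inv_mem (hZ b hb)) (hZ a ha)) (hZ b hb)
  · rw [← rt_eq_rt_iff.mpr hab]
    exact hZ a ha
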